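/- arXiv:2505.01647 — 2 statements merged into one kernel-verified Lean document; each statement's English description precedes it below -/
import Mathlib

section
/- For OJZJ with 1 ≤ k ≤ n/2, the Pareto front equals the set {(a, 2k + n - a) : a ∈ [2k..n] ∪ {k, n+k}}, and its cardinality is n - 2k + 3. -/
def onesCount (n : ℕ) (x : Fin n → Bool) : ℕ :=
  (Finset.univ.filter fun i => x i = true).card

def f1 (n k : ℕ) (x : Fin n → Bool) : ℕ :=
  if onesCount n x ≤ n - k ∨ onesCount n x = n then k + onesCount n x else n - onesCount n x

def f2 (n k : ℕ) (x : Fin n → Bool) : ℕ :=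
  if n - onesCount n x ≤ n - k ∨ onesCount n x = 0 then k + (n - onesCount n x)
  else n - (n - onesCount n x)

def ParetoOptimal (n k : ℕ) (x : Fin n → Bool) : Prop :=
  ¬ ∃ y : Fin n → Bool,
    (f1 n k x ≤ f1 n k y ∧ f2 n k x ≤ f2 n k y) ∧
    (f1 n k x < f1 n k y ∨ f2 n k x < f2 n k y)

lemma onesCount_le (n : ℕ) (x : Fin n → Bool) : onesCount n x ≤ n := by
  simpa [onesCount] using (Finset.card_filter_le Finset.univ fun i => x i = true).trans
    (by simp)

lemma exists_onesCount (n m : ℕ) (h : m ≤ n) : ∃ x : Fin n → Bool, onesCount n x = m := by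
  rcases eq_or_lt_of_le h with rfl | hlt
  · exact ⟨fun _ => true, by simp [onesCount]⟩
  · refine ⟨fun i => decide (i.val < m), ?_⟩
    unfold onesCount
    have : (Finset.univ.filter fun i : Fin n => (decide (i.val < m)) = true)
        = Finset.Iio ⟨m, hlt⟩ := by
      ext i; simp [Fin.lt_def]
    rw [this, Fin.card_Iio]

lemma pareto_iff (n k : ℕ) (hk : 1 ≤ k) (hkn : 2 * k ≤ n) (x : Fin n → Bool) :
    ParetoOptimal n k x ↔
      (onesCount n x = 0 ∨ onesCount n x = n ∨
        (k ≤ onesCount n x ∧ onesCount n x ≤ n - k)) := by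
  have hm := onesCount_le n x
  constructor
  · intro hp
    by_contra hP
    apply hp
    rcases (show onesCount n x < k ∨ n - k < onesCount n x from by omega) with hc | hc
    · obtain ⟨y, hy⟩ := exists_onesCount n k (by omega)
      refine ⟨y, ?_⟩
      simp only [f1, f2, hy]
      split_ifs <;> omega
    · obtain ⟨y, hy⟩ := exists_onesCount n (n - k) (by omega)
      refine ⟨y, ?_⟩
      simp only [f1, f2, hy]
      split_ifs <;> omega
  · rintro hP ⟨y, hdom⟩
    have hm' := onesCount_le n y
    simp only [f1, f2] at hdom
    split_ifs at hdom <;> omega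

theorem stmt1 (n k : ℕ) (hk : 1 ≤ k) (hkn : 2 * k ≤ n) :
    {p : ℕ × ℕ | ∃ x : Fin n → Bool, ParetoOptimal n k x ∧ p = (f1 n k x, f2 n k x)}
      = ↑((Finset.Icc (2 * k) n ∪ {k, n + k}).image fun a => (a, 2 * k + n - a)) ∧
    ((Finset.Icc (2 * k) n ∪ {k, n + k}).image fun a => (a, 2 * k + n - a)).card
      = n - 2 * k + 3 := by
  constructor
  · ext p
    simp only [Set.mem_setOf_eq, Finset.coe_image, Set.mem_image, Finset.mem_coe,
      Finset.mem_union, Finset.mem_Icc, Finset.mem_insert, Finset.mem_singleton]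
    constructor
    · rintro ⟨x, hpar, rfl⟩
      have hm := onesCount_le n x
      rw [pareto_iff n k hk hkn] at hpar
      rcases hpar with h0 | hn | ⟨h1, h2⟩
      · refine ⟨k, Or.inr (Or.inl rfl), ?_⟩
        simp only [f1, f2, Prod.mk.injEq]
        split_ifs <;> omega
      · refine ⟨n + k, Or.inr (Or.inr rfl), ?_⟩
        simp only [f1, f2, Prod.mk.injEq]
        split_ifs <;> omega
      · refine ⟨k + onesCount n x, Or.inl ⟨by omega, by omega⟩, ?_⟩
        simp only [f1, f2, Prod.mk.injEq]
        split_ifs <;> omega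
    · rintro ⟨a, ha, rfl⟩
      rcases ha with ⟨h1, h2⟩ | h | h
      · obtain ⟨x, hx⟩ := exists_onesCount n (a - k) (by omega)
        refine ⟨x, ?_, ?_⟩
        · rw [pareto_iff n k hk hkn]; right; right; omega
        · simp only [f1, f2, Prod.mk.injEq]
          split_ifs <;> omega
      · obtain ⟨x, hx⟩ := exists_onesCount n 0 (by omega)
        refine ⟨x, ?_, ?_⟩
        · rw [pareto_iff n k hk hkn]; left; omega
        · simp only [f1, f2, Prod.mk.injEq]
          split_ifs <;> omega
      · obtain ⟨x, hx⟩ := exists_onesCount n n (by omega)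
        refine ⟨x, ?_, ?_⟩
        · rw [pareto_iff n k hk hkn]; right; left; omega
        · simp only [f1, f2, Prod.mk.injEq]
          split_ifs <;> omega
  · rw [Finset.card_image_of_injective _ (fun a b h => congrArg Prod.fst h)]
    rw [Finset.card_union_of_disjoint]
    · rw [Nat.card_Icc]
      rw [show ({k, n + k} : Finset ℕ) = insert k {n + k} from rfl,
        Finset.card_insert_of_notMem (by simp; omega), Finset.card_singleton]
      omega
    · rw [Finset.disjoint_left]
      intro a haIcc haPair
      simp only [Finset.mem_Icc] at haIcc
      simp only [Finset.mem_insert, Finset.mem_singleton] at haPair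
      omega
end

section
/- For even m ≥ 2, problem size n a multiple of m'= m/2, n' = 2n/m, and 1 ≤ k ≤ n'/2, the Pareto front of mOJZJ has cardinality (n' - 2k + 3)^{m/2}. -/
theorem stmt9 (m n k : ℕ) (hm2 : 2 ≤ m) (hme : Even m) (hdvd : m / 2 ∣ n)
    (n' : ℕ) (hn' : n' = 2 * n / m) (hk1 : 1 ≤ k) (hk2 : 2 * k ≤ n') :
    ((Fintype.piFinset fun _ : Fin (m / 2) => (Finset.Icc (2 * k) n' ∪ {k, n' + k})).image
        (fun a => fun i => (a i, n' + 2 * k - a i))).card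
      = (n' - 2 * k + 3) ^ (m / 2) := by
  rw [Finset.card_image_of_injective _ (fun a b hab => by
    funext i
    exact (Prod.mk.injEq _ _ _ _).mp (congrFun hab i) |>.1)]
  rw [Fintype.card_piFinset]
  have hcard : (Finset.Icc (2 * k) n' ∪ {k, n' + k}).card = n' - 2 * k + 3 := by
    rw [Finset.card_union_of_disjoint, Nat.card_Icc, Finset.card_insert_of_notMem,
      Finset.card_singleton]
    · omega
    · simp; omega
    · simp only [Finset.disjoint_insert_right, Finset.disjoint_singleton_right,
        Finset.mem_Icc]
      omega
  rw [Finset.prod_const, Finset.card_univ, Fintype.card_fin, hcard]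
end
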